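/- arXiv:1305.1025 — 3 statements merged into one kernel-verified Lean document; each statement's English description precedes it below -/
import Mathlib

section
/- Let ℏ > 0, let S ∈ Sp(n) be a real symplectic 2n×2n matrix, and let U be a unitary operator on L²(ℝⁿ) satisfying the symplectic covariance relation U ∘ T^ℏ(z) = T^ℏ(Sz) ∘ U for all z ∈ ℝ^{2n} (as is the case for the metaplectic operator with projection S). Then for every nonzero window φ ∈ L²(ℝⁿ), every countable subset Λ of ℝ^{2n}, and all a, b > 0, the Gabor system G(φ,Λ) is an ℏ-frame with bounds a, b if and only if G(Uφ, SΛ) is an ℏ-frame with bounds a, b. In particular G(φ,Λ) is a tight ℏ-frame if and only if G(Uφ, SΛ) is. -/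
open MeasureTheory Matrix Complex
open scoped RealInnerProductSpace ENNReal

noncomputable section

abbrev E (n : ℕ) : Type := EuclideanSpace ℝ (Fin n)

def toE (n : ℕ) (v : Fin n → ℝ) : E n := WithLp.toLp 2 v
def fromE (n : ℕ) (v : E n) : Fin n → ℝ := v

/-- The Heisenberg–Weyl operator `T^ℏ(z₀)`:
`T^ℏ(z₀)ψ(x) = exp(i(p₀·x − p₀·x₀/2)/ℏ) ψ(x − x₀)`. -/
def HW (n : ℕ) (hb : ℝ) (z₀ : E n × E n) (ψ : E n → ℂ) : E n → ℂ :=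
  fun x => Complex.exp (Complex.I * (((⟪z₀.2, x⟫ - ⟪z₀.2, z₀.1⟫ / 2) / hb : ℝ) : ℂ)) *
    ψ (x - z₀.1)

/-- The frame sum `∑_{z ∈ Λ} |⟨ψ, T^ℏ(z)φ⟩|²`, valued in `ℝ≥0∞`. -/
def gaborSum (n : ℕ) (hb : ℝ) (φ : E n → ℂ) (Λ : Set (E n × E n)) (ψ : E n → ℂ) : ℝ≥0∞ :=
  ∑' z : Λ, ENNReal.ofReal (‖∫ x, ψ x * (starRingEnd ℂ) (HW n hb (z : E n × E n) φ x)‖ ^ 2)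

/-- The Gabor system `G(φ,Λ)` is an `ℏ`-frame with bounds `a`, `b`:
`a‖ψ‖² ≤ ∑_{z∈Λ} |⟨ψ, T^ℏ(z)φ⟩|² ≤ b‖ψ‖²` for every `ψ ∈ L²(ℝⁿ)`. -/
def IsGaborFrame (n : ℕ) (hb : ℝ) (φ : E n → ℂ) (Λ : Set (E n × E n)) (a b : ℝ) : Prop :=
  ∀ ψ : E n → ℂ, MemLp ψ 2 volume →
    (ENNReal.ofReal (a * ∫ x, ‖ψ x‖ ^ 2) ≤ gaborSum n hb φ Λ ψ ∧
      gaborSum n hb φ Λ ψ ≤ ENNReal.ofReal (b * ∫ x, ‖ψ x‖ ^ 2))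

/-- The standard symplectic form `σ(z,z′) = p·x′ − p′·x` on `ℝ²ⁿ = ℝⁿ × ℝⁿ`. -/
def sform (n : ℕ) (z w : E n × E n) : ℝ := ⟪z.2, w.1⟫ - ⟪w.2, z.1⟫

open scoped ComplexConjugate

/-!
Covariance and unitarity of `U` give `⟨Uψ, T^ℏ(Sz)Uφ⟩ = ⟨Uψ, U T^ℏ(z)φ⟩ = ⟨ψ, T^ℏ(z)φ⟩`,
so the coefficients of `Uψ` for `G(Uφ, SΛ)` are those of `ψ` for `G(φ, Λ)`; a symplectic `S` is
injective, so the frame sums over `SΛ` and `Λ` agree term by term. Since `U` preserves `‖·‖²` and is onto `L²` up to null sets, the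
frame inequalities transfer in both directions.
-/

lemma sform_neg_snd_fst (n : ℕ) (z : E n × E n) :
    sform n z (-z.2, z.1) = -(‖z.1‖ ^ 2 + ‖z.2‖ ^ 2) := by
  simp only [sform, inner_neg_right, real_inner_self_eq_norm_sq]
  ring

lemma injective_of_sform_map (n : ℕ) (S : (E n × E n) →ₗ[ℝ] (E n × E n))
    (hS : ∀ z w, sform n (S z) (S w) = sform n z w) : Function.Injective S := by
  refine (injective_iff_map_eq_zero S).mpr fun z hz => ?_
  have hsum : ‖z.1‖ ^ 2 + ‖z.2‖ ^ 2 = 0 := by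
    have h := hS z (-z.2, z.1)
    rw [hz, sform_neg_snd_fst] at h
    simp only [sform, Prod.fst_zero, Prod.snd_zero, inner_zero_left, inner_zero_right,
      sub_zero] at h
    linarith
  obtain ⟨h1, h2⟩ := (add_eq_zero_iff_of_nonneg (by positivity) (by positivity)).mp hsum
  exact Prod.ext (norm_eq_zero.mp (pow_eq_zero_iff two_ne_zero |>.mp h1))
    (norm_eq_zero.mp (pow_eq_zero_iff two_ne_zero |>.mp h2))

lemma memLp_HW (n : ℕ) (hb : ℝ) (z : E n × E n) {ψ : E n → ℂ} (hψ : MemLp ψ 2 volume) :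
    MemLp (HW n hb z ψ) 2 volume := by
  have htr : MemLp (fun x => ψ (x - z.1)) 2 volume :=
    hψ.comp_measurePreserving (measurePreserving_sub_right volume z.1)
  have hphase : Continuous fun x : E n =>
      Complex.exp (Complex.I * (((⟪z.2, x⟫ - ⟪z.2, z.1⟫ / 2) / hb : ℝ) : ℂ)) := by
    fun_prop
  refine MemLp.of_le htr (hphase.aestronglyMeasurable.mul htr.aestronglyMeasurable) ?_
  filter_upwards with x
  simp [HW, Complex.norm_exp]

section Integrals

variable {α : Type*} [MeasurableSpace α] {μ : Measure α}

lemma integral_mul_conj_eq_conj_integral (f g : α → ℂ) :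
    ∫ x, f x * conj (g x) ∂μ = conj (∫ x, conj (f x) * g x ∂μ) := by
  rw [← integral_conj]
  simp [mul_comm]

lemma integral_conj_mul_self (f : α → ℂ) :
    ∫ x, conj (f x) * f x ∂μ = ((∫ x, ‖f x‖ ^ 2 ∂μ : ℝ) : ℂ) := by
  rw [← integral_complex_ofReal]
  congr 1 with x
  rw [mul_comm, Complex.mul_conj, Complex.normSq_eq_norm_sq, Complex.ofReal_pow]

end Integrals

lemma gaborSum_congr_ae (n : ℕ) (hb : ℝ) (φ : E n → ℂ) (Λ : Set (E n × E n))
    {ψ ψ' : E n → ℂ} (h : ψ =ᵐ[volume] ψ') : gaborSum n hb φ Λ ψ = gaborSum n hb φ Λ ψ' := by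
  unfold gaborSum
  congr 1 with z
  rw [integral_congr_ae (h.mono fun x hx => by rw [hx])]

lemma gaborSum_image (n : ℕ) (hb : ℝ) (φ : E n → ℂ) (Λ : Set (E n × E n)) (ψ : E n → ℂ)
    {f : E n × E n → E n × E n} (hf : Function.Injective f) :
    gaborSum n hb φ (f '' Λ) ψ =
      ∑' z : Λ, ENNReal.ofReal (‖∫ x, ψ x * conj (HW n hb (f z) φ x)‖ ^ 2) := by
  unfold gaborSum
  rw [← (Equiv.Set.imageOfInjOn f Λ hf.injOn).tsum_eq]
  rfl

section Covariance

variable {n : ℕ} {hb : ℝ} {S : (E n × E n) →ₗ[ℝ] (E n × E n)} {U : (E n → ℂ) → (E n → ℂ)}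

lemma integral_norm_sq_map
    (hUinner : ∀ ψ χ, MemLp ψ 2 volume → MemLp χ 2 volume →
      ∫ x, conj (U ψ x) * U χ x = ∫ x, conj (ψ x) * χ x)
    {ψ : E n → ℂ} (hψ : MemLp ψ 2 volume) : ∫ x, ‖U ψ x‖ ^ 2 = ∫ x, ‖ψ x‖ ^ 2 := by
  have h := hUinner ψ ψ hψ hψ
  rwa [integral_conj_mul_self, integral_conj_mul_self, Complex.ofReal_inj] at h

lemma gaborSum_map (hS : ∀ z w, sform n (S z) (S w) = sform n z w)
    (hUinner : ∀ ψ χ, MemLp ψ 2 volume → MemLp χ 2 volume →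
      ∫ x, conj (U ψ x) * U χ x = ∫ x, conj (ψ x) * χ x)
    (hUcov : ∀ ψ z, U (HW n hb z ψ) = HW n hb (S z) (U ψ))
    {φ ψ : E n → ℂ} (hφ : MemLp φ 2 volume) (hψ : MemLp ψ 2 volume) (Λ : Set (E n × E n)) :
    gaborSum n hb (U φ) ((fun z => S z) '' Λ) (U ψ) = gaborSum n hb φ Λ ψ := by
  rw [gaborSum_image n hb _ Λ _ (injective_of_sform_map n S hS)]
  congr 1 with z
  rw [← hUcov, integral_mul_conj_eq_conj_integral, integral_mul_conj_eq_conj_integral,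
    hUinner ψ _ hψ (memLp_HW n hb z hφ)]

end Covariance

theorem stmt5_general (n : ℕ) (hb : ℝ)
    (S : (E n × E n) →ₗ[ℝ] (E n × E n))
    (hS : ∀ z w, sform n (S z) (S w) = sform n z w)
    (U : (E n → ℂ) → (E n → ℂ))
    (hUmem : ∀ ψ, MemLp ψ 2 volume → MemLp (U ψ) 2 volume)
    (hUinner : ∀ ψ χ, MemLp ψ 2 volume → MemLp χ 2 volume →
      ∫ x, (starRingEnd ℂ) (U ψ x) * U χ x = ∫ x, (starRingEnd ℂ) (ψ x) * χ x)
    (hUsurj : ∀ ψ, MemLp ψ 2 volume → ∃ χ, MemLp χ 2 volume ∧ U χ =ᵐ[volume] ψ)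
    (hUcov : ∀ ψ z, U (HW n hb z ψ) = HW n hb (S z) (U ψ))
    (φ : E n → ℂ) (hφ : MemLp φ 2 volume)
    (Λ : Set (E n × E n)) (a b : ℝ) :
    IsGaborFrame n hb φ Λ a b ↔ IsGaborFrame n hb (U φ) ((fun z => S z) '' Λ) a b := by
  have hsum : ∀ ψ, MemLp ψ 2 volume →
      gaborSum n hb (U φ) ((fun z => S z) '' Λ) (U ψ) = gaborSum n hb φ Λ ψ :=
    fun ψ hψ => gaborSum_map hS hUinner hUcov hφ hψ Λ
  constructor
  · intro hF ψ hψ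
    obtain ⟨χ, hχ, hUχ⟩ := hUsurj ψ hψ
    have hnorm : ∫ x, ‖ψ x‖ ^ 2 = ∫ x, ‖χ x‖ ^ 2 := by
      rw [← integral_norm_sq_map hUinner hχ]
      exact integral_congr_ae (hUχ.mono fun x hx => by simp only [hx])
    rw [← gaborSum_congr_ae n hb _ _ hUχ, hsum χ hχ, hnorm]
    exact hF χ hχ
  · intro hF ψ hψ
    simpa only [hsum ψ hψ, integral_norm_sq_map hUinner hψ] using hF (U ψ) (hUmem ψ hψ)

/-- if `S` is a (linear) symplectic transformation and `U` is a unitary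
operator on `L²(ℝⁿ)` satisfying the symplectic covariance relation
`U ∘ T^ℏ(z) = T^ℏ(Sz) ∘ U`, then `G(φ,Λ)` is an `ℏ`-frame with bounds `a,b` iff
`G(Uφ, SΛ)` is, with the same bounds. -/
theorem stmt5 (n : ℕ) (hb : ℝ) (hhb : 0 < hb)
    (S : (E n × E n) →ₗ[ℝ] (E n × E n))
    (hS : ∀ z w, sform n (S z) (S w) = sform n z w)
    (U : (E n → ℂ) → (E n → ℂ))
    (hUmem : ∀ ψ, MemLp ψ 2 volume → MemLp (U ψ) 2 volume)
    (hUinner : ∀ ψ χ, MemLp ψ 2 volume → MemLp χ 2 volume →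
      ∫ x, (starRingEnd ℂ) (U ψ x) * U χ x = ∫ x, (starRingEnd ℂ) (ψ x) * χ x)
    (hUsurj : ∀ ψ, MemLp ψ 2 volume → ∃ χ, MemLp χ 2 volume ∧ U χ =ᵐ[volume] ψ)
    (hUcov : ∀ ψ z, U (HW n hb z ψ) = HW n hb (S z) (U ψ))
    (φ : E n → ℂ) (hφ : MemLp φ 2 volume) (hφ0 : ¬ φ =ᵐ[volume] (0 : E n → ℂ))
    (Λ : Set (E n × E n)) (hΛ : Λ.Countable) (a b : ℝ) (ha : 0 < a) (hbd : 0 < b) :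
    IsGaborFrame n hb φ Λ a b ↔ IsGaborFrame n hb (U φ) ((fun z => S z) '' Λ) a b :=
  stmt5_general n hb S hS U hUmem hUinner hUsurj hUcov φ hφ Λ a b
end
end

section
/- Let S = [[A, B],[C, D]] ∈ Sp(n) be a real symplectic matrix written in n×n blocks, and let M be a complex symmetric n×n matrix whose imaginary part Im M is positive definite (i.e. M belongs to the Siegel upper half-space Σₙ⁺). Then the matrix A + BM is invertible, and α(S)M := (C + DM)(A + BM)^{−1} is again a complex symmetric matrix whose imaginary part is positive definite. (Thus (S, M) ↦ α(S)M defines an action of Sp(n) on the Siegel half-space.) -/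
/-!
Put `Q = A + BM` and `P = C + DM`. The block relations of `SᵀJS = J` turn into the identities
`QᵀP = PᵀQ` and `QᴴP - PᴴQ = M - Mᴴ = 2i · Im M`. The second one forces `Q` to be injective, since
`v* (QᴴP - PᴴQ) v` vanishes for `v ∈ ker Q` while `v* (Im M) v > 0` for `v ≠ 0`. The first one
makes `PQ⁻¹` symmetric, and conjugating the second one by `Q⁻¹` gives
`Im (PQ⁻¹) = Q⁻ᴴ (Im M) Q⁻¹`, which is positive definite.
-/

open Matrix
open scoped ComplexOrder

noncomputable section

/-- The standard symplectic matrix `J = [[0, I], [−I, 0]]`. -/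
def Jmat (n : ℕ) : Matrix (Fin n ⊕ Fin n) (Fin n ⊕ Fin n) ℝ :=
  Matrix.fromBlocks 0 1 (-1) 0

/-- The complexification of a real matrix. -/
def cplx {n : ℕ} (A : Matrix (Fin n) (Fin n) ℝ) : Matrix (Fin n) (Fin n) ℂ :=
  A.map ((↑) : ℝ → ℂ)

namespace Matrix

section Symplectic

variable {ι R : Type*} [Fintype ι] [DecidableEq ι] [CommRing R]

structure SymplecticBlocks (A B C D : Matrix ι ι R) : Prop where
  transpose_mul_left_symm : Aᵀ * C = Cᵀ * A
  transpose_mul_right_symm : Bᵀ * D = Dᵀ * B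
  transpose_mul_sub_eq_one : Aᵀ * D - Cᵀ * B = 1

theorem SymplecticBlocks.of_fromBlocks {A B C D : Matrix ι ι R}
    (h : (fromBlocks A B C D)ᵀ * fromBlocks 0 1 (-1) 0 * fromBlocks A B C D =
      fromBlocks 0 1 (-1) 0) :
    SymplecticBlocks A B C D := by
  simp only [fromBlocks_transpose, fromBlocks_multiply, mul_zero, mul_one, mul_neg, zero_add,
    add_zero, neg_mul] at h
  -- the lower left block is minus the transpose of the upper right one
  obtain ⟨h₁₁, h₁₂, -, h₂₂⟩ := fromBlocks_inj.mp h
  refine ⟨?_, ?_, ?_⟩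
  · rw [← sub_eq_zero, ← h₁₁]; abel
  · rw [← sub_eq_zero, ← h₂₂]; abel
  · rw [← h₁₂]; abel

theorem SymplecticBlocks.map {S : Type*} [CommRing S] {A B C D : Matrix ι ι R}
    (h : SymplecticBlocks A B C D) (f : R →+* S) :
    SymplecticBlocks (A.map f) (B.map f) (C.map f) (D.map f) := by
  have hf (X Y : Matrix ι ι R) : (X.map f)ᵀ * Y.map f = f.mapMatrix (Xᵀ * Y) := by
    simp [transpose_map]
  refine ⟨?_, ?_, ?_⟩
  · rw [hf, hf, h.transpose_mul_left_symm]
  · rw [hf, hf, h.transpose_mul_right_symm]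
  · rw [hf, hf, ← map_sub, h.transpose_mul_sub_eq_one, map_one]

theorem SymplecticBlocks.transpose_mul_sub_transpose_mul {A B C D : Matrix ι ι R}
    (h : SymplecticBlocks A B C D) (M N : Matrix ι ι R) :
    (A + B * N)ᵀ * (C + D * M) - (C + D * N)ᵀ * (A + B * M) = M - Nᵀ := by
  have h' : Dᵀ * A - Bᵀ * C = 1 := by
    simpa using congrArg transpose h.transpose_mul_sub_eq_one
  calc (A + B * N)ᵀ * (C + D * M) - (C + D * N)ᵀ * (A + B * M)
      = (Aᵀ * C - Cᵀ * A) + (Aᵀ * D - Cᵀ * B) * M - Nᵀ * (Dᵀ * A - Bᵀ * C)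
          + Nᵀ * (Bᵀ * D - Dᵀ * B) * M := by
        simp only [transpose_add, transpose_mul]; noncomm_ring
    _ = M - Nᵀ := by
        rw [h.transpose_mul_left_symm, h.transpose_mul_right_symm,
          h.transpose_mul_sub_eq_one, h']
        simp

end Symplectic

section Complex

variable {ι : Type*}

theorem IsSymm.sub_conjTranspose {X : Matrix ι ι ℂ} (hX : X.IsSymm) :
    X - Xᴴ = (2 * Complex.I) • (X.map Complex.im).map (↑) := by
  ext i j
  rw [sub_apply, conjTranspose_apply, hX.apply i j, RCLike.star_def, Complex.sub_conj]
  simp only [smul_apply, map_apply, smul_eq_mul]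
  push_cast
  ring

variable [Fintype ι]

theorem star_dotProduct_map_ofReal_mulVec {R : Matrix ι ι ℝ} (hR : R.IsSymm) (x : ι → ℂ) :
    star x ⬝ᵥ (R.map (↑) *ᵥ x) =
      ↑((fun i ↦ (x i).re) ⬝ᵥ R *ᵥ fun i ↦ (x i).re) +
        ↑((fun i ↦ (x i).im) ⬝ᵥ R *ᵥ fun i ↦ (x i).im) := by
  set u : ι → ℝ := fun i ↦ (x i).re
  set v : ι → ℝ := fun i ↦ (x i).im
  have hx : x = (↑) ∘ u + Complex.I • ((↑) ∘ v) := by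
    funext i; apply Complex.ext <;> simp [u, v]
  have hsx : star x = (↑) ∘ u - Complex.I • ((↑) ∘ v) := by
    funext i; apply Complex.ext <;> simp [u, v]
  have hquad (w : ι → ℝ) :
      ((↑) ∘ w) ⬝ᵥ (R.map (↑) *ᵥ ((↑) ∘ w)) = ((w ⬝ᵥ R *ᵥ w : ℝ) : ℂ) := by
    have hmulVec : ((↑) : ℝ → ℂ) ∘ (R *ᵥ w) = R.map (↑) *ᵥ ((↑) ∘ w) :=
      funext (Complex.ofRealHom.map_mulVec R w)
    rw [← hmulVec]
    exact (Complex.ofRealHom.map_dotProduct w (R *ᵥ w)).symm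
  have hcross : ((↑) ∘ v) ⬝ᵥ (R.map (↑) *ᵥ ((↑) ∘ u)) =
      ((↑) ∘ u) ⬝ᵥ (R.map ((↑) : ℝ → ℂ) *ᵥ ((↑) ∘ v)) := by
    rw [dotProduct_mulVec, ← mulVec_transpose, (hR.map _).eq, dotProduct_comm]
  rw [hsx, hx, mulVec_add, mulVec_smul]
  simp only [dotProduct_add, sub_dotProduct, dotProduct_smul, smul_dotProduct, smul_eq_mul,
    hquad, hcross]
  linear_combination -(↑(v ⬝ᵥ R *ᵥ v) : ℂ) * Complex.I_sq

theorem posDef_map_ofReal_iff {R : Matrix ι ι ℝ} : (R.map ((↑) : ℝ → ℂ)).PosDef ↔ R.PosDef := by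
  rw [posDef_iff_dotProduct_mulVec, posDef_iff_dotProduct_mulVec,
    isHermitian_map_iff (fun r ↦ by simp) Complex.ofReal_injective]
  refine and_congr_right fun hR ↦ ?_
  have hRs : R.IsSymm := by rwa [IsHermitian, conjTranspose_eq_transpose_of_trivial] at hR
  simp only [star_dotProduct_map_ofReal_mulVec hRs, star_trivial]
  constructor
  · intro h w hw
    simpa using h (x := (↑) ∘ w) fun h0 ↦ hw (funext fun i ↦ by simpa using congrFun h0 i)
  · intro h x hx
    have hnonneg (w : ι → ℝ) : 0 ≤ w ⬝ᵥ R *ᵥ w := by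
      rcases eq_or_ne w 0 with rfl | hw
      · simp
      · exact (h hw).le
    rw [← Complex.ofReal_add, Complex.zero_lt_real]
    by_cases hre : (fun i ↦ (x i).re) = 0
    · have him : (fun i ↦ (x i).im) ≠ 0 := fun him ↦
        hx (funext fun i ↦ Complex.ext (congrFun hre i) (congrFun him i))
      exact add_pos_of_nonneg_of_pos (hnonneg _) (h him)
    · exact add_pos_of_pos_of_nonneg (h hre) (hnonneg _)

theorem conjTranspose_map_ofReal_add_mul (A B : Matrix ι ι ℝ) (M : Matrix ι ι ℂ) :
    (A.map (↑) + B.map (↑) * M)ᴴ = (A.map (↑) + B.map (↑) * M.map star)ᵀ := by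
  have hreal (X : Matrix ι ι ℝ) : (X.map ((↑) : ℝ → ℂ))ᴴ = (X.map (↑))ᵀ := by
    ext i j; simp
  rw [conjTranspose_add, conjTranspose_mul, hreal, hreal, transpose_add, transpose_mul]
  rfl

variable [DecidableEq ι]

theorem isUnit_of_conjTranspose_mul_sub {Q P M : Matrix ι ι ℂ} (hM : M.IsSymm)
    (hMim : (M.map Complex.im).PosDef) (h : Qᴴ * P - Pᴴ * Q = M - Mᴴ) : IsUnit Q := by
  rw [isUnit_iff_isUnit_det, isUnit_iff_ne_zero]
  intro hdet
  obtain ⟨v, hv, hQv⟩ := exists_mulVec_eq_zero_iff.mpr hdet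
  have h0 : star v ⬝ᵥ ((Qᴴ * P - Pᴴ * Q) *ᵥ v) = 0 := by
    rw [sub_mulVec, ← mulVec_mulVec, ← mulVec_mulVec, hQv, dotProduct_sub, dotProduct_mulVec,
      ← star_mulVec, hQv]
    simp
  rw [h, hM.sub_conjTranspose, smul_mulVec, dotProduct_smul, smul_eq_mul] at h0
  exact ((posDef_map_ofReal_iff.mpr hMim).dotProduct_mulVec_pos hv).ne'
    ((mul_eq_zero.mp h0).resolve_left (by simp [Complex.I_ne_zero]))

end Complex

variable {ι : Type*} [Fintype ι] [DecidableEq ι]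

theorem isSymm_mul_inv {R : Type*} [CommRing R] {Q P : Matrix ι ι R} (hQ : IsUnit Q)
    (h : Qᵀ * P = Pᵀ * Q) : (P * Q⁻¹).IsSymm := by
  have hdet : IsUnit Q.det := (isUnit_iff_isUnit_det Q).mp hQ
  have hdetT : IsUnit Qᵀ.det := by rwa [det_transpose]
  calc (P * Q⁻¹)ᵀ = Qᵀ⁻¹ * (Pᵀ * Q * Q⁻¹) := by
        rw [transpose_mul, transpose_nonsing_inv, mul_nonsing_inv_cancel_right _ _ hdet]
    _ = P * Q⁻¹ := by rw [← h, mul_assoc, nonsing_inv_mul_cancel_left _ _ hdetT]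

theorem mul_inv_sub_conjTranspose {R : Type*} [CommRing R] [StarRing R] {Q P : Matrix ι ι R}
    (hQ : IsUnit Q) :
    P * Q⁻¹ - (P * Q⁻¹)ᴴ = Q⁻¹ᴴ * (Qᴴ * P - Pᴴ * Q) * Q⁻¹ := by
  have hdet : IsUnit Q.det := (isUnit_iff_isUnit_det Q).mp hQ
  have hQQ : Q⁻¹ᴴ * Qᴴ = 1 := by
    rw [← conjTranspose_mul, mul_nonsing_inv _ hdet, conjTranspose_one]
  calc P * Q⁻¹ - (P * Q⁻¹)ᴴ = Q⁻¹ᴴ * Qᴴ * (P * Q⁻¹) - Q⁻¹ᴴ * (Pᴴ * (Q * Q⁻¹)) := by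
        rw [hQQ, mul_nonsing_inv _ hdet, mul_one, one_mul, conjTranspose_mul]
    _ = Q⁻¹ᴴ * (Qᴴ * P - Pᴴ * Q) * Q⁻¹ := by
        rw [mul_sub, sub_mul]; congr 1 <;> noncomm_ring

theorem posDef_map_im_mul_inv {Q P M : Matrix ι ι ℂ} (hQ : IsUnit Q)
    (hsymm : (P * Q⁻¹).IsSymm) (hM : M.IsSymm) (hMim : (M.map Complex.im).PosDef)
    (h : Qᴴ * P - Pᴴ * Q = M - Mᴴ) : ((P * Q⁻¹).map Complex.im).PosDef := by
  have him : ((P * Q⁻¹).map Complex.im).map (↑) =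
      star Q⁻¹ * (M.map Complex.im).map (↑) * Q⁻¹ := by
    refine smul_right_injective _ (by simp [Complex.I_ne_zero] : (2 * Complex.I) ≠ 0) ?_
    beta_reduce
    rw [← hsymm.sub_conjTranspose, mul_inv_sub_conjTranspose hQ, h, hM.sub_conjTranspose,
      Matrix.mul_smul, Matrix.smul_mul, star_eq_conjTranspose]
  rw [← posDef_map_ofReal_iff, him]
  exact (isUnit_nonsing_inv_iff.mpr hQ).posDef_star_left_conjugate_iff.mpr
    (posDef_map_ofReal_iff.mpr hMim)

end Matrix

/-- the symplectic group acts on the Siegel half-space: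
if `S = [[A,B],[C,D]]` is symplectic and `M` is complex symmetric with `Im M`
positive definite, then `A + BM` is invertible and `(C + DM)(A + BM)⁻¹` is again
complex symmetric with positive definite imaginary part. -/
theorem stmt8 (n : ℕ) (A B C D : Matrix (Fin n) (Fin n) ℝ)
    (hS : (Matrix.fromBlocks A B C D)ᵀ * Jmat n * Matrix.fromBlocks A B C D = Jmat n)
    (M : Matrix (Fin n) (Fin n) ℂ) (hMsym : Mᵀ = M)
    (hMim : (M.map Complex.im).PosDef) :
    IsUnit (cplx A + cplx B * M) ∧
      ((cplx C + cplx D * M) * (cplx A + cplx B * M)⁻¹)ᵀ =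
        (cplx C + cplx D * M) * (cplx A + cplx B * M)⁻¹ ∧
      ((((cplx C + cplx D * M) * (cplx A + cplx B * M)⁻¹).map Complex.im).PosDef) := by
  have hSp : SymplecticBlocks (cplx A) (cplx B) (cplx C) (cplx D) :=
    (SymplecticBlocks.of_fromBlocks hS).map Complex.ofRealHom
  unfold cplx at hSp ⊢
  set Q := A.map (↑) + B.map (↑) * M
  set P := C.map (↑) + D.map (↑) * M
  have hQP : Qᴴ * P - Pᴴ * Q = M - Mᴴ := by
    rw [conjTranspose_map_ofReal_add_mul, conjTranspose_map_ofReal_add_mul]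
    exact hSp.transpose_mul_sub_transpose_mul M (M.map star)
  have hQ : IsUnit Q := isUnit_of_conjTranspose_mul_sub hMsym hMim hQP
  have hsymm : (P * Q⁻¹).IsSymm := by
    refine isSymm_mul_inv hQ (sub_eq_zero.mp ?_)
    rw [hSp.transpose_mul_sub_transpose_mul M M, hMsym, sub_self]
  exact ⟨hQ, hsymm, posDef_map_im_mul_inv hQ hsymm hMsym hMim hQP⟩
end
end

section
/- Let S = [[A, B],[C, D]] ∈ Sp(n) be a real symplectic matrix written in n×n blocks. Then: (i) the real matrix A A^T + B B^T is symmetric positive definite; (ii) the complex matrix A + iB is invertible; and (iii) the matrix (C + iD)(A + iB)^{−1} has real part (C A^T + D B^T)(A A^T + B B^T)^{−1} and imaginary part (A A^T + B B^T)^{−1}; in particular its imaginary part is symmetric positive definite. -/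
open Matrix

noncomputable section

/-!
With `M = A + iB`, the row conditions `ABᵀ = BAᵀ` and `DAᵀ − CBᵀ = 1` of a symplectic matrix
give `M Mᴴ = AAᵀ + BBᵀ =: G` and `(C + iD) Mᴴ = (CAᵀ + DBᵀ) + i·1`. The transpose
`ADᵀ − BCᵀ = 1` of the second one says that `[A B]` has the right inverse `[Dᵀ; −Cᵀ]`, so
`G = [A B][A B]ᵀ` is positive definite;
hence `M⁻¹ = Mᴴ G⁻¹` and `(C + iD) M⁻¹ = (CAᵀ + DBᵀ) G⁻¹ + i G⁻¹`.
-/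

namespace Matrix

variable {l R : Type*} [Fintype l] [DecidableEq l] [CommRing R]

theorem fromBlocks_mem_symplecticGroup_iff_rows {A B C D : Matrix l l R} :
    fromBlocks A B C D ∈ symplecticGroup l R ↔
      A * Bᵀ = B * Aᵀ ∧ C * Dᵀ = D * Cᵀ ∧ A * Dᵀ - B * Cᵀ = 1 := by
  rw [← SymplecticGroup.transpose_mem_iff, fromBlocks_transpose,
    SymplecticGroup.fromBlocks_mem_iff]
  simp only [transpose_transpose]

theorem PosDef.mul_conjTranspose_add_mul_conjTranspose {m k : Type*} [Fintype m] [Fintype k]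
    [DecidableEq m] [PartialOrder R] [StarRing R] [StarOrderedRing R] [NoZeroDivisors R]
    {A B : Matrix m k R} {X Y : Matrix k m R} (h : A * X + B * Y = 1) :
    (A * Aᴴ + B * Bᴴ).PosDef := by
  have hinj : Function.Injective (fromCols A B).vecMul := fun v w hvw => by
    simpa only [vecMul_vecMul, fromCols_mul_fromRows, h, vecMul_one] using
      congrArg (· ᵥ* fromRows X Y) hvw
  simpa [conjTranspose_fromCols_eq_fromRows_conjTranspose, fromCols_mul_fromRows] using
    PosDef.mul_conjTranspose_self _ hinj

end Matrix

theorem Jmat_eq_neg_J (n : ℕ) : Jmat n = -J (Fin n) ℝ := by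
  simp [Jmat, J, fromBlocks_neg]

theorem mem_symplecticGroup_iff_Jmat {n : ℕ} {S : Matrix (Fin n ⊕ Fin n) (Fin n ⊕ Fin n) ℝ} :
    S ∈ symplecticGroup (Fin n) ℝ ↔ Sᵀ * Jmat n * S = Jmat n := by
  simp [SymplecticGroup.mem_iff', Jmat_eq_neg_J]

section cplx

open Complex

variable {n : ℕ}

theorem cplx_eq_mapMatrix (X : Matrix (Fin n) (Fin n) ℝ) : cplx X = ofRealHom.mapMatrix X := rfl

theorem conjTranspose_cplx (X : Matrix (Fin n) (Fin n) ℝ) : (cplx X)ᴴ = cplx Xᵀ := by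
  ext i j; simp [cplx]

theorem map_re_cplx_add_I_smul_cplx (X Y : Matrix (Fin n) (Fin n) ℝ) :
    (cplx X + I • cplx Y).map re = X := by
  ext i j; simp [cplx]

theorem map_im_cplx_add_I_smul_cplx (X Y : Matrix (Fin n) (Fin n) ℝ) :
    (cplx X + I • cplx Y).map im = Y := by
  ext i j; simp [cplx]

theorem cplx_add_I_smul_cplx_mul_cplx (X Y Z : Matrix (Fin n) (Fin n) ℝ) :
    (cplx X + I • cplx Y) * cplx Z = cplx (X * Z) + I • cplx (Y * Z) := by
  simp [cplx_eq_mapMatrix, add_mul]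

theorem cplx_add_I_smul_cplx_mul_conjTranspose (X Y Z W : Matrix (Fin n) (Fin n) ℝ) :
    (cplx X + I • cplx Y) * (cplx Z + I • cplx W)ᴴ =
      cplx (X * Zᵀ + Y * Wᵀ) + I • cplx (Y * Zᵀ - X * Wᵀ) := by
  simp only [conjTranspose_add, conjTranspose_smul, conjTranspose_cplx, star_def, conj_I]
  simp only [cplx_eq_mapMatrix, map_add, map_sub, map_mul, add_mul, mul_add, smul_mul_assoc,
    mul_smul_comm, smul_add, smul_sub, smul_smul, neg_smul, mul_neg, I_mul_I, one_smul]
  abel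

theorem isUnit_and_inv_eq_of_mul_conjTranspose_eq_cplx {M : Matrix (Fin n) (Fin n) ℂ}
    {G : Matrix (Fin n) (Fin n) ℝ} (hG : IsUnit G.det) (hM : M * Mᴴ = cplx G) :
    IsUnit M ∧ M⁻¹ = Mᴴ * cplx G⁻¹ := by
  have hright : M * (Mᴴ * cplx G⁻¹) = 1 := by
    rw [← Matrix.mul_assoc, hM, cplx_eq_mapMatrix, cplx_eq_mapMatrix, ← map_mul,
      mul_nonsing_inv _ hG, map_one]
  exact ⟨(isUnit_iff_isUnit_det M).mpr (isUnit_det_of_right_inverse hright),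
    inv_eq_right_inv hright⟩

end cplx

/-- for a symplectic matrix `S = [[A,B],[C,D]]`:
(i) `AAᵀ + BBᵀ` is symmetric positive definite; (ii) `A + iB` is invertible;
(iii) `(C + iD)(A + iB)⁻¹` has real part `(CAᵀ + DBᵀ)(AAᵀ + BBᵀ)⁻¹` and imaginary
part `(AAᵀ + BBᵀ)⁻¹`, which is symmetric positive definite. -/
theorem stmt9 (n : ℕ) (A B C D : Matrix (Fin n) (Fin n) ℝ)
    (hS : (Matrix.fromBlocks A B C D)ᵀ * Jmat n * Matrix.fromBlocks A B C D = Jmat n) :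
    (A * Aᵀ + B * Bᵀ).PosDef ∧
      IsUnit (cplx A + Complex.I • cplx B) ∧
      ((cplx C + Complex.I • cplx D) * (cplx A + Complex.I • cplx B)⁻¹).map Complex.re =
        (C * Aᵀ + D * Bᵀ) * (A * Aᵀ + B * Bᵀ)⁻¹ ∧
      ((cplx C + Complex.I • cplx D) * (cplx A + Complex.I • cplx B)⁻¹).map Complex.im =
        (A * Aᵀ + B * Bᵀ)⁻¹ ∧
      ((A * Aᵀ + B * Bᵀ)⁻¹).PosDef := by
  obtain ⟨hAB, -, hAD⟩ :=
    fromBlocks_mem_symplecticGroup_iff_rows.mp (mem_symplecticGroup_iff_Jmat.mpr hS)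
  have hDA : D * Aᵀ - C * Bᵀ = 1 := by
    simpa only [transpose_sub, transpose_mul, transpose_transpose, transpose_one] using
      congrArg transpose hAD
  have hG : (A * Aᵀ + B * Bᵀ).PosDef := by
    simpa only [conjTranspose_eq_transpose_of_trivial] using
      PosDef.mul_conjTranspose_add_mul_conjTranspose (X := Dᵀ) (Y := -Cᵀ)
        (by rwa [Matrix.mul_neg, ← sub_eq_add_neg])
  have hMM : (cplx A + Complex.I • cplx B) * (cplx A + Complex.I • cplx B)ᴴ =
      cplx (A * Aᵀ + B * Bᵀ) := by
    rw [cplx_add_I_smul_cplx_mul_conjTranspose, hAB, sub_self, cplx_eq_mapMatrix 0, map_zero,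
      smul_zero, add_zero]
  obtain ⟨hM, hMinv⟩ := isUnit_and_inv_eq_of_mul_conjTranspose_eq_cplx hG.det_pos.ne'.isUnit hMM
  have hZ : (cplx C + Complex.I • cplx D) * (cplx A + Complex.I • cplx B)⁻¹ =
      cplx ((C * Aᵀ + D * Bᵀ) * (A * Aᵀ + B * Bᵀ)⁻¹) + Complex.I • cplx (A * Aᵀ + B * Bᵀ)⁻¹ := by
    rw [hMinv, ← Matrix.mul_assoc, cplx_add_I_smul_cplx_mul_conjTranspose, hDA,
      cplx_add_I_smul_cplx_mul_cplx, Matrix.one_mul]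
  exact ⟨hG, hM, by rw [hZ, map_re_cplx_add_I_smul_cplx], by rw [hZ, map_im_cplx_add_I_smul_cplx],
    hG.inv⟩
end
end
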